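/- Let (W,S) be a Coxeter system, K ⊆ S, and suppose u = u^K·u_K is a BP-decomposition. If v ≤ u in Bruhat order, then v_K ≤ u_K, where v = v^K·v_K is the parabolic decomposition of v. -/

import Mathlib

namespace Cox

variable {B : Type*} {W : Type*} [Group W] {M : CoxeterMatrix B} (cs : CoxeterSystem M W)

/-- One step of Bruhat order: right-multiply by a reflection, increasing length. -/
def lt1 (u v : W) : Prop :=
  (∃ t : W, cs.IsReflection t ∧ v = u * t) ∧ cs.length u < cs.length v

/-- The (strong) Bruhat order on `W`. -/
def le (u v : W) : Prop := Relation.ReflTransGen (lt1 cs) u v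

/-- The support of `w`: the simple reflections lying below `w` in Bruhat order
(equivalently, appearing in any reduced word for `w`). -/
def supp (w : W) : Set B := {i | le cs (cs.simple i) w}

/-- The standard parabolic subgroup generated by the simple reflections in `K`. -/
def parab (K : Set B) : Subgroup W := Subgroup.closure (cs.simple '' K)

/-- `x` belongs to the parabolic quotient `W^K`: no right descents in `K`. -/
def InQuot (K : Set B) (x : W) : Prop :=
  ∀ i ∈ K, cs.length x < cs.length (x * cs.simple i)

/-- The left descent set of `v`. -/
def DescL (v : W) : Set B := {i | cs.length (cs.simple i * v) < cs.length v}

/-- `x` is the longest element of the standard parabolic subgroup `W_K`. -/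
def IsLongest (K : Set B) (x : W) : Prop :=
  x ∈ parab cs K ∧ ∀ y ∈ parab cs K, cs.length y ≤ cs.length x

end Cox

open Cox

/-!
If `u = x y` with `ℓ u = ℓ x + ℓ y` and `supp x ∩ K ⊆ D_L(y)`, then every `w ∈ W_K` below `u`
already lies below `y`; the theorem is the case `w = v_K ≤ v ≤ u`. Induct on `ℓ x`: for a left
descent `s` of `x`, the factorization `s u = (s x) y` satisfies the same hypotheses, and the
lifting property gives `min(w, s w) ≤ s u`. If `w < s w`, induction applies to `w` itself.
Otherwise `s w` and `w` both lie in `W_K`, so `s` is a simple reflection of `K`; since `s ≤ x`,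
the BP condition makes `s` a left descent of `y`, and lifting `s w ≤ y` yields `w ≤ y`.

Lifting rests on the strong exchange property, proved with the reflection representation of `W`
on `W × ZMod 2`: its second coordinate is the parity of the number of occurrences of a reflection
in the right inversion sequence of a word, which is therefore independent of the word.
-/

open CoxeterSystem

namespace Cox

variable {B W : Type*} [Group W] {M : CoxeterMatrix B} (cs : CoxeterSystem M W)

local prefix:100 "s" => cs.simple
local prefix:100 "ℓ" => cs.length
local prefix:100 "π" => cs.wordProd

theorem alternatingWord_two_mul_succ (i j : B) (k : ℕ) :
    alternatingWord i j (2 * (k + 1)) = i :: j :: alternatingWord i j (2 * k) := by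
  rw [show 2 * (k + 1) = 2 * k + 1 + 1 by ring, alternatingWord_succ', alternatingWord_succ']
  simp

theorem reverse_alternatingWord_two_mul (i j : B) (k : ℕ) :
    (alternatingWord i j (2 * k)).reverse = alternatingWord j i (2 * k) := by
  induction k with
  | zero => rfl
  | succ k ih =>
    rw [alternatingWord_two_mul_succ, show 2 * (k + 1) = 2 * k + 1 + 1 by ring,
      alternatingWord_succ, alternatingWord_succ]
    simp [ih]

-- The `k`-th left inversion of `[j, i, j, i, …]` is `sⱼ (sᵢ sⱼ)ᵏ`, of period `M i j` in `k`.
open scoped Classical in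
theorem even_count_rightInvSeq_alternatingWord (i j : B) (t : W) :
    Even ((cs.rightInvSeq (alternatingWord i j (2 * M i j))).count t) := by
  set m := M i j
  have hperiod (k : ℕ) : s j * (s i * s j) ^ (m + k) = s j * (s i * s j) ^ k := by
    rw [pow_add, cs.simple_mul_simple_pow, one_mul]
  have hlis : cs.leftInvSeq (alternatingWord j i (2 * m)) =
      (List.range (2 * m)).map fun k => s j * (s i * s j) ^ k := by
    refine List.ext_getElem (by simp) fun k hk _ => ?_
    rw [getElem_leftInvSeq_alternatingWord cs j i m k (by simpa using hk),
      prod_alternatingWord_eq_mul_pow]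
    simp [Nat.mul_add_div]
  rw [← List.reverse_reverse (cs.rightInvSeq _), ← leftInvSeq_reverse,
    reverse_alternatingWord_two_mul, List.count_reverse, hlis, two_mul, List.range_add,
    List.map_append, List.map_map]
  simp only [Function.comp_def, hperiod, List.count_append]
  exact ⟨_, rfl⟩

open scoped Classical in
noncomputable def reflectionPerm (i : B) : Equiv.Perm (W × ZMod 2) :=
  Function.Involutive.toPerm (fun p => (s i * p.1 * s i, p.2 + if p.1 = s i then 1 else 0))
    fun ⟨t, ε⟩ => by
      have hconj : s i * t * s i = s i ↔ t = s i := by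
        constructor
        · intro h
          simpa [mul_assoc] using congrArg (fun x => s i * x * s i) h
        · rintro rfl
          simp
      simp only [hconj, add_assoc, CharTwo.add_self_eq_zero, add_zero, Prod.mk.injEq]
      simp [← mul_assoc]

open scoped Classical in
theorem reflectionPerm_apply (i : B) (t : W) (ε : ZMod 2) :
    reflectionPerm cs i (t, ε) = (s i * t * s i, ε + if t = s i then 1 else 0) :=
  rfl

open scoped Classical in
theorem list_prod_map_reflectionPerm_apply (ω : List B) (t : W) (ε : ZMod 2) :
    (ω.map (reflectionPerm cs)).prod (t, ε) =
      (π ω * t * (π ω)⁻¹, ε + ((cs.rightInvSeq ω).count t : ZMod 2)) := by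
  induction ω generalizing ε with
  | nil => simp
  | cons i ω ih =>
    have hiff : π ω * t * (π ω)⁻¹ = s i ↔ (π ω)⁻¹ * s i * π ω = t := by
      constructor <;> intro h <;> rw [← h] <;> group
    simp only [List.map_cons, List.prod_cons, Equiv.Perm.mul_apply, ih, reflectionPerm_apply,
      hiff, rightInvSeq, List.count_cons, wordProd_cons, beq_iff_eq, Prod.mk.injEq]
    constructor
    · simp [mul_assoc]
    · push_cast
      ring

theorem reflectionPerm_mul_pow (i j : B) (k : ℕ) :
    (reflectionPerm cs i * reflectionPerm cs j) ^ k =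
      ((alternatingWord i j (2 * k)).map (reflectionPerm cs)).prod := by
  induction k with
  | zero => simp [alternatingWord]
  | succ k ih => rw [pow_succ', ih, alternatingWord_two_mul_succ]; simp [mul_assoc]

theorem isLiftable_reflectionPerm : M.IsLiftable (reflectionPerm cs) := by
  intro i j
  ext ⟨t, ε⟩ : 1
  rw [reflectionPerm_mul_pow, list_prod_map_reflectionPerm_apply,
    prod_alternatingWord_eq_mul_pow, Nat.mul_div_cancel_left _ two_pos,
    (ZMod.natCast_eq_zero_iff_even).mpr (even_count_rightInvSeq_alternatingWord cs i j t)]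
  simp

noncomputable def reflectionRep : W →* Equiv.Perm (W × ZMod 2) :=
  cs.lift ⟨reflectionPerm cs, isLiftable_reflectionPerm cs⟩

noncomputable def inversionParity (w t : W) : ZMod 2 := (reflectionRep cs w (t, 0)).2

theorem reflectionRep_wordProd (ω : List B) :
    reflectionRep cs (π ω) = (ω.map (reflectionPerm cs)).prod := by
  rw [wordProd, map_list_prod, List.map_map]
  congr 1
  exact List.map_congr_left fun i _ => cs.lift_apply_simple (isLiftable_reflectionPerm cs) i

open scoped Classical in
theorem inversionParity_wordProd (ω : List B) (t : W) :
    inversionParity cs (π ω) t = (cs.rightInvSeq ω).count t := by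
  simp [inversionParity, reflectionRep_wordProd, list_prod_map_reflectionPerm_apply]

theorem reflectionRep_apply (w t : W) (ε : ZMod 2) :
    reflectionRep cs w (t, ε) = (w * t * w⁻¹, ε + inversionParity cs w t) := by
  obtain ⟨ω, -, rfl⟩ := cs.exists_isReduced w
  rw [inversionParity_wordProd, reflectionRep_wordProd, list_prod_map_reflectionPerm_apply]

theorem inversionParity_one (t : W) : inversionParity cs 1 t = 0 := by
  simp [inversionParity]

theorem inversionParity_simple_self (i : B) : inversionParity cs (s i) (s i) = 1 := by
  simpa using inversionParity_wordProd cs [i] (s i)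

theorem inversionParity_mul (a b t : W) :
    inversionParity cs (a * b) t =
      inversionParity cs b t + inversionParity cs a (b * t * b⁻¹) := by
  have h := reflectionRep_apply cs (a * b) t 0
  rw [map_mul, Equiv.Perm.mul_apply, reflectionRep_apply, reflectionRep_apply] at h
  simpa using (congrArg Prod.snd h).symm

theorem inversionParity_self {t : W} (ht : cs.IsReflection t) : inversionParity cs t t = 1 := by
  obtain ⟨u, i, rfl⟩ := ht
  have hconj : u⁻¹ * (u * s i * u⁻¹) * u⁻¹⁻¹ = s i := by group
  have hcancel := inversionParity_mul cs u u⁻¹ (u * s i * u⁻¹)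
  rw [mul_inv_cancel, inversionParity_one, hconj] at hcancel
  rw [inversionParity_mul, inversionParity_mul, hconj, inversionParity_simple_self,
    cs.inv_simple, show s i * s i * s i = s i by simp]
  linear_combination -hcancel

theorem inversionParity_mul_self {w t : W} (ht : cs.IsReflection t) :
    inversionParity cs (w * t) t = inversionParity cs w t + 1 := by
  rw [inversionParity_mul, inversionParity_self cs ht, ht.inv, ht.mul_self, one_mul, add_comm]

theorem exists_eraseIdx_of_inversionParity_eq_one {ω : List B} {t : W}
    (h : inversionParity cs (π ω) t = 1) : ∃ j < ω.length, π ω * t = π (ω.eraseIdx j) := by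
  classical
  rw [inversionParity_wordProd] at h
  have hmem : t ∈ cs.rightInvSeq ω := List.count_pos_iff.mp <| Nat.pos_of_ne_zero fun h0 => by
    simp [h0] at h
  obtain ⟨j, hj, rfl⟩ := List.getElem_of_mem hmem
  refine ⟨j, by simpa using hj, ?_⟩
  rw [← cs.wordProd_mul_getD_rightInvSeq, List.getD_eq_getElem]

theorem inversionParity_eq_one_of_length_mul_lt {w t : W} (ht : cs.IsReflection t)
    (h : ℓ (w * t) < ℓ w) : inversionParity cs w t = 1 := by
  by_contra hne
  have h0 : inversionParity cs w t = 0 := by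
    generalize inversionParity cs w t = x at hne
    revert x
    decide
  obtain ⟨σ, hσ, hwt⟩ := cs.exists_isReduced (w * t)
  have h1 : inversionParity cs (π σ) t = 1 := by
    rw [← hwt, inversionParity_mul_self cs ht, h0, zero_add]
  obtain ⟨j, hj, hσj⟩ := exists_eraseIdx_of_inversionParity_eq_one cs h1
  have hw : w = π (σ.eraseIdx j) := by rw [← hσj, ← hwt, mul_assoc, ht.mul_self, mul_one]
  have hle := cs.length_wordProd_le (σ.eraseIdx j)
  rw [← hw, List.length_eraseIdx_of_lt hj] at hle
  have : ℓ (w * t) = σ.length := hwt ▸ hσ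
  omega

/-- Strong exchange property. -/
theorem exists_eraseIdx_of_length_mul_lt {ω : List B} {t : W} (ht : cs.IsReflection t)
    (h : ℓ (π ω * t) < ℓ (π ω)) : ∃ j < ω.length, π ω * t = π (ω.eraseIdx j) :=
  exists_eraseIdx_of_inversionParity_eq_one cs (inversionParity_eq_one_of_length_mul_lt cs ht h)

theorem le.refl (w : W) : le cs w w := Relation.ReflTransGen.refl

variable {cs}

theorem le.trans {a b c : W} (hab : le cs a b) (hbc : le cs b c) : le cs a c :=
  Relation.ReflTransGen.trans hab hbc

theorem le_of_lt1 {a b : W} (h : lt1 cs a b) : le cs a b := Relation.ReflTransGen.single h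

variable (cs)

theorem le_simple_mul {w : W} {i : B} (h : ℓ w < ℓ (s i * w)) : le cs w (s i * w) := by
  refine le_of_lt1 ⟨⟨w⁻¹ * s i * w, ?_, by group⟩, h⟩
  simpa using (cs.isReflection_simple i).conj w⁻¹

theorem simple_mul_le {w : W} {i : B} (h : ℓ (s i * w) < ℓ w) : le cs (s i * w) w := by
  simpa using le_simple_mul cs (w := s i * w) (i := i) (by simpa using h)

theorem le_mul_of_length_mul_eq_add {a b : W} (h : ℓ (a * b) = ℓ a + ℓ b) :
    le cs b (a * b) := by
  induction hn : ℓ a generalizing a with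
  | zero => rw [cs.length_eq_zero_iff.mp hn, one_mul]; exact le.refl cs b
  | succ n ih =>
    obtain ⟨i, hi⟩ := cs.exists_leftDescent_of_ne_one (w := a) (by rintro rfl; simp at hn)
    have hi := cs.isLeftDescent_iff.mp hi
    have hab : a * b = s i * (s i * a * b) := by simp [mul_assoc]
    have hshort := cs.length_mul_le (s i * a) b
    have hlong : ℓ (a * b) ≤ ℓ (s i * a * b) + 1 := by
      rw [hab]; rcases cs.length_simple_mul (s i * a * b) i with h' | h' <;> omega
    refine (ih (a := s i * a) (by omega) (by omega)).trans ?_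
    rw [hab]
    exact le_simple_mul cs (by rw [← hab]; omega)

theorem one_le (w : W) : le cs 1 w := by
  simpa using le_mul_of_length_mul_eq_add cs (a := w) (b := 1) (by simp)

noncomputable def leftMin (i : B) (w : W) : W := if ℓ (s i * w) < ℓ w then s i * w else w

noncomputable def leftMax (i : B) (w : W) : W := if ℓ (s i * w) < ℓ w then w else s i * w

variable {cs}

theorem leftMin_of_lt {i : B} {w : W} (h : ℓ (s i * w) < ℓ w) : leftMin cs i w = s i * w :=
  if_pos h

theorem leftMin_of_gt {i : B} {w : W} (h : ℓ w < ℓ (s i * w)) : leftMin cs i w = w :=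
  if_neg h.not_gt

theorem leftMax_of_lt {i : B} {w : W} (h : ℓ (s i * w) < ℓ w) : leftMax cs i w = w :=
  if_pos h

theorem leftMax_of_gt {i : B} {w : W} (h : ℓ w < ℓ (s i * w)) : leftMax cs i w = s i * w :=
  if_neg h.not_gt

variable (cs)

theorem le_leftMax (i : B) (w : W) : le cs w (leftMax cs i w) := by
  rcases lt_or_gt_of_ne (cs.length_simple_mul_ne w i) with h | h
  · rw [leftMax_of_lt h]; exact le.refl cs w
  · rw [leftMax_of_gt h]; exact le_simple_mul cs h

theorem simple_mul_le_leftMax (i : B) (w : W) : le cs (s i * w) (leftMax cs i w) := by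
  rcases lt_or_gt_of_ne (cs.length_simple_mul_ne w i) with h | h
  · rw [leftMax_of_lt h]; exact simple_mul_le cs h
  · rw [leftMax_of_gt h]; exact le.refl cs _

variable {cs}

theorem lt1.simple_mul {z u : W} (h : lt1 cs z u) {i : B} (hlen : ℓ (s i * z) < ℓ (s i * u)) :
    lt1 cs (s i * z) (s i * u) := by
  obtain ⟨⟨t, ht, rfl⟩, -⟩ := h
  exact ⟨⟨t, ht, (mul_assoc _ _ _).symm⟩, hlen⟩

theorem lt1.eq_or_length_simple_mul_lt {z u : W} (h : lt1 cs z u) {i : B}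
    (hu : ℓ (s i * u) < ℓ u) : z = s i * u ∨ ℓ (s i * z) < ℓ (s i * u) := by
  obtain ⟨⟨t, ht, rfl⟩, hlen⟩ := h
  obtain ⟨ω, hω, hωu⟩ := cs.exists_isReduced (s i * (z * t))
  have hu' : z * t = π (i :: ω) := by rw [wordProd_cons, ← hωu]; simp
  have hz : z = π (i :: ω) * t := by rw [← hu', mul_assoc, ht.mul_self, mul_one]
  obtain ⟨j, hj, hzj⟩ := exists_eraseIdx_of_length_mul_lt cs ht (ω := i :: ω)
    (by rw [← hz, ← hu']; exact hlen)
  rw [← hz] at hzj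
  rcases j with _ | j
  · left
    simpa [hωu] using hzj
  · right
    have hsz : s i * z = π (ω.eraseIdx j) := by simp [hzj, wordProd_cons]
    have hle := cs.length_wordProd_le (ω.eraseIdx j)
    rw [← hsz, List.length_eraseIdx_of_lt (by simpa using hj)] at hle
    have : ℓ (s i * (z * t)) = ω.length := hωu ▸ hω
    simp only [List.length_cons] at hj
    omega

theorem lt1.leftMin_le_leftMin {z u : W} (h : lt1 cs z u) (i : B) :
    le cs (leftMin cs i z) (leftMin cs i u) := by
  have hzu := h.2
  have hz₁ := cs.length_simple_mul z i
  have hu₁ := cs.length_simple_mul u i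
  rcases lt_or_gt_of_ne (cs.length_simple_mul_ne z i) with hz | hz <;>
    rcases lt_or_gt_of_ne (cs.length_simple_mul_ne u i) with hu | hu
  · rw [leftMin_of_lt hz, leftMin_of_lt hu]
    exact le_of_lt1 (h.simple_mul (by omega))
  · rw [leftMin_of_lt hz, leftMin_of_gt hu]
    exact (simple_mul_le cs hz).trans (le_of_lt1 h)
  · rw [leftMin_of_gt hz, leftMin_of_lt hu]
    rcases h.eq_or_length_simple_mul_lt hu with rfl | hlt
    · exact le.refl cs _
    · exact (le_simple_mul cs hz).trans (le_of_lt1 (h.simple_mul hlt))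
  · rw [leftMin_of_gt hz, leftMin_of_gt hu]
    exact le_of_lt1 h

theorem lt1.leftMax_le_leftMax {z u : W} (h : lt1 cs z u) (i : B) :
    le cs (leftMax cs i z) (leftMax cs i u) := by
  have hzu := h.2
  have hz₁ := cs.length_simple_mul z i
  have hu₁ := cs.length_simple_mul u i
  rcases lt_or_gt_of_ne (cs.length_simple_mul_ne z i) with hz | hz <;>
    rcases lt_or_gt_of_ne (cs.length_simple_mul_ne u i) with hu | hu
  · rw [leftMax_of_lt hz, leftMax_of_lt hu]
    exact le_of_lt1 h
  · rw [leftMax_of_lt hz, leftMax_of_gt hu]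
    exact (le_of_lt1 h).trans (le_simple_mul cs hu)
  · rw [leftMax_of_gt hz, leftMax_of_lt hu]
    rcases h.eq_or_length_simple_mul_lt hu with rfl | hlt
    · simpa using le.refl cs u
    · exact (le_of_lt1 (h.simple_mul hlt)).trans (simple_mul_le cs hu)
  · rw [leftMax_of_gt hz, leftMax_of_gt hu]
    exact le_of_lt1 (h.simple_mul (by omega))

/-- The lifting property of Bruhat order, in the form of monotonicity of `leftMin`. -/
theorem leftMin_le_leftMin {v u : W} (h : le cs v u) (i : B) :
    le cs (leftMin cs i v) (leftMin cs i u) :=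
  Relation.ReflTransGen.lift' (leftMin cs i) (fun _ _ hab => hab.leftMin_le_leftMin i) _ _ h

theorem leftMax_le_leftMax {v u : W} (h : le cs v u) (i : B) :
    le cs (leftMax cs i v) (leftMax cs i u) :=
  Relation.ReflTransGen.lift' (leftMax cs i) (fun _ _ hab => hab.leftMax_le_leftMax i) _ _ h

variable (cs)

/-- The deletion property. -/
theorem exists_isReduced_sublist (ω : List B) :
    ∃ τ, τ.Sublist ω ∧ cs.IsReduced τ ∧ π τ = π ω := by
  induction ω using List.reverseRecOn with
  | nil => exact ⟨[], List.Sublist.slnil, by simp [CoxeterSystem.IsReduced], rfl⟩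
  | append_singleton ω i ih =>
    obtain ⟨τ, hsub, hτ, hπ⟩ := ih
    have hτ : ℓ (π τ) = τ.length := hτ
    rcases cs.length_mul_simple (π τ) i with hlen | hlen
    · refine ⟨τ ++ [i], hsub.append (List.Sublist.refl _), ?_, by simp [wordProd_append, hπ]⟩
      simp [CoxeterSystem.IsReduced, wordProd_append, hlen, hτ]
    · obtain ⟨j, hj, hτj⟩ :=
        exists_eraseIdx_of_length_mul_lt cs (cs.isReflection_simple i) (ω := τ) (by omega)
      refine ⟨τ.eraseIdx j, ((List.eraseIdx_sublist τ j).trans hsub).trans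
        (List.sublist_append_left ω [i]), ?_, by simp [← hτj, wordProd_append, hπ]⟩
      rw [CoxeterSystem.IsReduced, ← hτj, List.length_eraseIdx_of_lt hj]
      omega

theorem wordProd_mem_parab {K : Set B} {ω : List B} (h : ∀ i ∈ ω, i ∈ K) :
    π ω ∈ parab cs K := by
  induction ω with
  | nil => exact one_mem _
  | cons i ω ih =>
    rw [wordProd_cons]
    exact mul_mem (Subgroup.subset_closure ⟨i, h i List.mem_cons_self, rfl⟩)
      (ih fun j hj => h j (List.mem_cons_of_mem i hj))

theorem exists_wordProd_eq_of_mem_parab {K : Set B} {w : W} (h : w ∈ parab cs K) :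
    ∃ ω : List B, (∀ i ∈ ω, i ∈ K) ∧ π ω = w := by
  induction h using Subgroup.closure_induction with
  | mem x hx =>
    obtain ⟨i, hi, rfl⟩ := hx
    exact ⟨[i], by simpa using hi, cs.wordProd_singleton i⟩
  | one => exact ⟨[], by simp, cs.wordProd_nil⟩
  | mul x y _ _ hx hy =>
    obtain ⟨ω, hω, rfl⟩ := hx
    obtain ⟨τ, hτ, rfl⟩ := hy
    refine ⟨ω ++ τ, fun k hk => ?_, cs.wordProd_append ω τ⟩
    exact (List.mem_append.mp hk).elim (hω k) (hτ k)
  | inv x _ hx =>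
    obtain ⟨ω, hω, rfl⟩ := hx
    exact ⟨ω.reverse, by simpa using hω, cs.wordProd_reverse ω⟩

theorem simple_mul_mem_parab {K : Set B} {w : W} {i : B} (hw : w ∈ parab cs K)
    (h : ℓ (s i * w) < ℓ w) : s i * w ∈ parab cs K := by
  obtain ⟨ω, hω, hπ⟩ := exists_wordProd_eq_of_mem_parab cs (inv_mem hw)
  have hinv : π ω * s i = (s i * w)⁻¹ := by rw [hπ, mul_inv_rev, cs.inv_simple]
  obtain ⟨j, -, hj⟩ := exists_eraseIdx_of_length_mul_lt cs (cs.isReflection_simple i)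
    (ω := ω) (by rwa [hinv, cs.length_inv, hπ, cs.length_inv])
  rw [← inv_inv (s i * w), ← hinv, hj]
  exact inv_mem (wordProd_mem_parab cs fun k hk => hω k ((List.eraseIdx_sublist ω j).subset hk))

theorem exists_simple_eq_of_simple_mem_parab {K : Set B} {i : B} (h : s i ∈ parab cs K) :
    ∃ k ∈ K, s k = s i := by
  obtain ⟨ω, hω, hπ⟩ := exists_wordProd_eq_of_mem_parab cs h
  obtain ⟨τ, hsub, hτ, hτπ⟩ := exists_isReduced_sublist cs ω
  have hlen : τ.length = 1 := by rw [← hτ.eq, hτπ, hπ, cs.length_simple]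
  obtain ⟨k, rfl⟩ := List.length_eq_one_iff.mp hlen
  exact ⟨k, hω k (hsub.subset (List.mem_singleton_self k)), by simpa [hπ] using hτπ⟩

theorem simple_le_of_length_simple_mul_lt {x : W} {i : B} (h : ℓ (s i * x) < ℓ x) :
    le cs (s i) x := by
  simpa [leftMax_of_lt h, leftMax_of_gt (cs := cs) (w := 1) (i := i) (by simp)] using
    leftMax_le_leftMax (one_le cs x) i

theorem le_of_simple_mul_le {w y : W} {i : B} (hw : le cs (s i * w) y)
    (hy : ℓ (s i * y) < ℓ y) : le cs w y := by
  simpa [leftMax_of_lt hy] using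
    (simple_mul_le_leftMax cs i (s i * w)).trans (leftMax_le_leftMax hw i)

theorem le_of_le_mul_of_mem_parab {K : Set B} {x y w : W} (hxy : ℓ (x * y) = ℓ x + ℓ y)
    (hBP : supp cs x ∩ K ⊆ DescL cs y) (hw : w ∈ parab cs K) (hwxy : le cs w (x * y)) :
    le cs w y := by
  induction hn : ℓ x generalizing x w with
  | zero => rwa [cs.length_eq_zero_iff.mp hn, one_mul] at hwxy
  | succ n ih =>
    obtain ⟨i, hi⟩ := cs.exists_leftDescent_of_ne_one (w := x) (by rintro rfl; simp at hn)
    have hi := cs.isLeftDescent_iff.mp hi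
    have hshort : ℓ (s i * (x * y)) ≤ ℓ (s i * x) + ℓ y := by
      simpa [mul_assoc] using cs.length_mul_le (s i * x) y
    have hlong : ℓ (x * y) ≤ ℓ (s i * (x * y)) + 1 := by
      rcases cs.length_simple_mul (x * y) i with h' | h' <;> omega
    have hxy' : ℓ (s i * x * y) = ℓ (s i * x) + ℓ y := by rw [mul_assoc]; omega
    have hBP' : supp cs (s i * x) ∩ K ⊆ DescL cs y := fun k hk =>
      hBP ⟨hk.1.trans (simple_mul_le cs (by omega)), hk.2⟩
    have hmin : le cs (leftMin cs i w) (s i * x * y) := by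
      rw [mul_assoc, ← leftMin_of_lt (w := x * y) (by omega)]
      exact leftMin_le_leftMin hwxy i
    rcases lt_or_gt_of_ne (cs.length_simple_mul_ne w i) with hw' | hw'
    · rw [leftMin_of_lt hw'] at hmin
      have hsw := simple_mul_mem_parab cs hw hw'
      obtain ⟨k, hk, hki⟩ := exists_simple_eq_of_simple_mem_parab cs
        (by simpa using mul_mem hsw (inv_mem hw))
      have hkx : le cs (s k) x := hki ▸ simple_le_of_length_simple_mul_lt cs (by omega)
      have hy : ℓ (s i * y) < ℓ y := hki ▸ hBP ⟨hkx, hk⟩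
      exact le_of_simple_mul_le cs (ih hxy' hBP' hsw hmin (by omega)) hy
    · rw [leftMin_of_gt hw'] at hmin
      exact ih hxy' hBP' hw hmin (by omega)

end Cox

theorem stmt9_general {B W : Type*} [Group W] {M : CoxeterMatrix B} (cs : CoxeterSystem M W)
    (K : Set B) (u x y v xv yv : W) (hu : u = x * y)
    (hadd : cs.length u = cs.length x + cs.length y)
    (hBP : supp cs x ∩ K ⊆ DescL cs y)
    (hvu : le cs v u) (hv : v = xv * yv)
    (hyv : yv ∈ parab cs K)
    (haddv : cs.length v = cs.length xv + cs.length yv) :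
    le cs yv y := by
  subst hu hv
  exact le_of_le_mul_of_mem_parab cs hadd hBP hyv
    ((le_mul_of_length_mul_eq_add cs haddv).trans hvu)

theorem stmt9 {B W : Type*} [Group W] {M : CoxeterMatrix B} (cs : CoxeterSystem M W)
    (K : Set B) (u x y v xv yv : W) (hu : u = x * y)
    (hx : InQuot cs K x) (hy : y ∈ parab cs K)
    (hadd : cs.length u = cs.length x + cs.length y)
    (hBP : supp cs x ∩ K ⊆ DescL cs y)
    (hvu : le cs v u) (hv : v = xv * yv)
    (hxv : InQuot cs K xv) (hyv : yv ∈ parab cs K)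
    (haddv : cs.length v = cs.length xv + cs.length yv) :
    le cs yv y :=
  stmt9_general cs K u x y v xv yv hu hadd hBP hvu hv hyv haddv
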